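/- arXiv:1202.5203 — 7 statements merged into one kernel-verified Lean document; each statement's English description precedes it below -/
import Mathlib

section
/- For n ≥ 5 and any abelian group E, the commutator subgroup of the wreath product G_n = E^n ⋊ S_n is perfect. -/
/-!
Let `ψ : Eⁿ ⋊ Sₙ → E × {±1}` be `(f, σ) ↦ (∏ f, sign σ)`. Its target is abelian, so
`[Gₙ, Gₙ] ≤ ker ψ`, and the theorem follows once `ker ψ ≤ [ker ψ, ker ψ]`, since then
`[Gₙ, Gₙ] = ker ψ` is perfect. The kernel is generated by `Aₙ`, which is perfect for `n ≥ 5`,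
and by the vectors `eⱼ(x) / eₖ(x)`; each of these is the commutator of `eⱼ(x) / eₘ(x)` with a
3-cycle that sends `j` to `k` and fixes `m`.
-/

/-- The permutation action of `Equiv.Perm (Fin n)` on `Fin n → E` by permuting
coordinates, as a homomorphism to the automorphism group. -/
def permHom (n : ℕ) (E : Type*) [CommGroup E] :
    Equiv.Perm (Fin n) →* MulAut (Fin n → E) where
  toFun σ :=
    { toFun := fun f => f ∘ σ.symm
      invFun := fun f => f ∘ σ
      left_inv := fun f => by funext i; simp
      right_inv := fun f => by funext i; simp
      map_mul' := fun f g => rfl }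
  map_one' := by ext f i; rfl
  map_mul' σ τ := by ext f i; rfl

open Equiv Equiv.Perm SemidirectProduct
open scoped commutatorElement

theorem commutator_eq_top_of_commutator_eq_self {G : Type*} [Group G] {H : Subgroup G}
    (h : ⁅H, H⁆ = H) : commutator H = ⊤ := by
  apply Subgroup.map_injective H.subtype_injective
  rw [Subgroup.map_subtype_commutator, h, ← MonoidHom.range_eq_map, Subgroup.range_subtype]

section Pi

variable {ι G : Type*} [Fintype ι] [DecidableEq ι] [CommGroup G]

theorem prod_mulSingle_div_mulSingle (j k : ι) (x : G) :
    ∏ i, (Pi.mulSingle j x / Pi.mulSingle k x : ι → G) i = 1 := by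
  simp only [Pi.div_apply, Finset.prod_div_distrib, Finset.prod_pi_mulSingle', Finset.mem_univ,
    if_true, div_self']

theorem prod_mulSingle_div_mulSingle_eq {f : ι → G} (hf : ∏ i, f i = 1) (i₀ : ι) :
    ∏ i, (Pi.mulSingle i (f i) / Pi.mulSingle i₀ (f i)) = f := by
  have h : ∏ i, Pi.mulSingle i₀ (f i) = (1 : ι → G) := by
    simpa [hf] using (map_prod (MonoidHom.mulSingle (fun _ => G) i₀) f Finset.univ).symm
  rw [Finset.prod_div_distrib, Finset.univ_prod_mulSingle, h, div_one]

end Pi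

section Wreath

variable {E : Type*} [CommGroup E] {n : ℕ}

abbrev WreathProduct (E : Type*) [CommGroup E] (n : ℕ) : Type _ :=
  (Fin n → E) ⋊[permHom n E] Perm (Fin n)

@[simp]
theorem permHom_apply (σ : Perm (Fin n)) (f : Fin n → E) : permHom n E σ f = f ∘ σ.symm :=
  rfl

theorem permHom_mulSingle (σ : Perm (Fin n)) (i : Fin n) (x : E) :
    permHom n E σ (Pi.mulSingle i x) = Pi.mulSingle (σ i) x := by
  rw [permHom_apply, Pi.mulSingle_comp_equiv, symm_symm]

theorem inl_commutatorElement_inr (f : Fin n → E) (σ : Perm (Fin n)) :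
    ⁅(inl f : WreathProduct E n), (inr σ : WreathProduct E n)⁆ = inl (f / permHom n E σ f) := by
  rw [commutatorElement_def, div_eq_mul_inv, ← map_inv (permHom n E σ), map_mul, inl_aut]
  simp only [map_inv]
  group

variable (E n) in
def prodSignHom : WreathProduct E n →* E × ℤˣ where
  toFun x := (∏ i, x.left i, sign x.right)
  map_one' := by simp
  map_mul' a b := by
    ext
    · simp only [mul_left, Pi.mul_apply, permHom_apply, Function.comp_apply,
        Finset.prod_mul_distrib, Prod.fst_mul, Equiv.prod_comp]
    · simp

theorem mem_ker_prodSignHom {x : WreathProduct E n} :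
    x ∈ (prodSignHom E n).ker ↔ ∏ i, x.left i = 1 ∧ sign x.right = 1 :=
  Prod.ext_iff

theorem inl_mem_ker_prodSignHom {f : Fin n → E} :
    inl f ∈ (prodSignHom E n).ker ↔ ∏ i, f i = 1 := by
  rw [mem_ker_prodSignHom]
  simp

theorem inr_mem_ker_prodSignHom {σ : Perm (Fin n)} :
    inr σ ∈ (prodSignHom E n).ker ↔ sign σ = 1 := by
  rw [mem_ker_prodSignHom]
  simp

theorem inr_mem_commutator_ker_prodSignHom (hn : 5 ≤ n) {σ : Perm (Fin n)} (hσ : sign σ = 1) :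
    inr σ ∈ ⁅(prodSignHom E n).ker, (prodSignHom E n).ker⁆ := by
  have hA : (alternatingGroup (Fin n)).map (inr : Perm (Fin n) →* WreathProduct E n) ≤
      (prodSignHom E n).ker :=
    Subgroup.map_le_iff_le_comap.2 fun τ hτ => inr_mem_ker_prodSignHom.2 hτ
  have hAA := Subgroup.commutator_mono hA hA
  rw [← Subgroup.map_commutator,
    commutator_alternatingGroup_eq_self (by simpa using hn)] at hAA
  exact hAA (Subgroup.mem_map_of_mem _ hσ)

theorem inl_mulSingle_div_mulSingle_mem_commutator_ker_prodSignHom (hn : 4 ≤ n) (x : E)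
    (j k : Fin n) :
    inl (Pi.mulSingle j x / Pi.mulSingle k x) ∈
      ⁅(prodSignHom E n).ker, (prodSignHom E n).ker⁆ := by
  rcases eq_or_ne j k with rfl | hjk
  · simp
  obtain ⟨m, -, hm⟩ := Finset.exists_mem_notMem_of_card_lt_card (s := {j, k})
    (t := Finset.univ) (by simpa using Finset.card_le_two.trans_lt (by omega : 2 < n))
  obtain ⟨l, -, hl⟩ := Finset.exists_mem_notMem_of_card_lt_card (s := {j, k, m})
    (t := Finset.univ) (by simpa using Finset.card_le_three.trans_lt (by omega : 3 < n))
  simp only [Finset.mem_insert, Finset.mem_singleton, not_or] at hm hl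
  obtain ⟨hmj, hmk⟩ := hm
  obtain ⟨hlj, hlk, hlm⟩ := hl
  set σ : Perm (Fin n) := swap l k * swap j l
  have hσ : sign σ = 1 := by
    simp [σ, sign_swap hlk, sign_swap (Ne.symm hlj)]
  have hσj : σ j = k := by simp [σ]
  have hσm : σ m = m := by
    simp [σ, swap_apply_of_ne_of_ne hmj (Ne.symm hlm), swap_apply_of_ne_of_ne (Ne.symm hlm) hmk]
  have key := Subgroup.commutator_mem_commutator
    (inl_mem_ker_prodSignHom.2 (prod_mulSingle_div_mulSingle j m x))
    (inr_mem_ker_prodSignHom.2 hσ)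
  rwa [inl_commutatorElement_inr, map_div (permHom n E σ), permHom_mulSingle, permHom_mulSingle,
    hσj, hσm, div_div_div_cancel_right] at key

theorem inl_mem_commutator_ker_prodSignHom (hn : 4 ≤ n) {f : Fin n → E} (hf : ∏ i, f i = 1) :
    inl f ∈ ⁅(prodSignHom E n).ker, (prodSignHom E n).ker⁆ := by
  change f ∈ ⁅(prodSignHom E n).ker, (prodSignHom E n).ker⁆.comap inl
  rw [← prod_mulSingle_div_mulSingle_eq hf ⟨0, by omega⟩]
  exact Subgroup.prod_mem _ fun i _ =>
    inl_mulSingle_div_mulSingle_mem_commutator_ker_prodSignHom hn _ _ _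

theorem commutator_ker_prodSignHom (hn : 5 ≤ n) :
    ⁅(prodSignHom E n).ker, (prodSignHom E n).ker⁆ = (prodSignHom E n).ker := by
  refine le_antisymm (Subgroup.commutator_le_self _) fun x hx => ?_
  obtain ⟨hleft, hright⟩ := mem_ker_prodSignHom.1 hx
  rw [← inl_left_mul_inr_right x]
  exact mul_mem (inl_mem_commutator_ker_prodSignHom (by omega) hleft)
    (inr_mem_commutator_ker_prodSignHom hn hright)

theorem commutator_wreathProduct_eq_ker_prodSignHom (hn : 5 ≤ n) :
    commutator (WreathProduct E n) = (prodSignHom E n).ker := by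
  refine le_antisymm (Abelianization.commutator_subset_ker _) ?_
  rw [← commutator_ker_prodSignHom hn]
  exact Subgroup.commutator_mono le_top le_top

end Wreath

/-- For `n ≥ 5` and any abelian group `E`, the commutator subgroup of the
wreath product `Gₙ = Eⁿ ⋊ Sₙ` is perfect. -/
theorem stmt_1 (E : Type*) [CommGroup E] (n : ℕ) (hn : 5 ≤ n) :
    commutator ↥(commutator ((Fin n → E) ⋊[permHom n E] Equiv.Perm (Fin n))) = ⊤ := by
  apply commutator_eq_top_of_commutator_eq_self
  rw [commutator_wreathProduct_eq_ker_prodSignHom hn, commutator_ker_prodSignHom hn]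
end

section
/- For n ≥ 5 and any abelian group E, the abelianization of H = K ⋊ A_n is trivial, where K = ker(E^n → E) is the kernel of the product map and A_n is the alternating group acting on K by permuting coordinates. -/
variable (n : ℕ) (E : Type*) [CommGroup E]

/-- The product map `Eⁿ → E`. -/
def prodHom : (Fin n → E) →* E where
  toFun f := ∏ i, f i
  map_one' := by simp
  map_mul' f g := by simp [Finset.prod_mul_distrib]

/-- `K = ker (Eⁿ → E)`, the kernel of the product map. -/
def Ker : Subgroup (Fin n → E) := (prodHom n E).ker

/-- The action of a permutation `σ` on `K = ker (Eⁿ → E)` by permuting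
coordinates. -/
def KerAut (σ : Equiv.Perm (Fin n)) : MulAut ↥(Ker n E) where
  toFun x := ⟨fun i => x.1 (σ⁻¹ i), by
    have h : ∏ i, x.1 (σ⁻¹ i) = ∏ i, x.1 i := Equiv.prod_comp σ⁻¹ x.1
    have hx : ∏ i, x.1 i = 1 := x.2
    simpa [Ker, prodHom, MonoidHom.mem_ker] using h.trans hx⟩
  invFun x := ⟨fun i => x.1 (σ i), by
    have h : ∏ i, x.1 (σ i) = ∏ i, x.1 i := Equiv.prod_comp σ x.1
    have hx : ∏ i, x.1 i = 1 := x.2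
    simpa [Ker, prodHom, MonoidHom.mem_ker, h] using hx⟩
  left_inv x := Subtype.ext (funext fun i => by simp)
  right_inv x := Subtype.ext (funext fun i => by simp)
  map_mul' x y := Subtype.ext rfl

/-- The action of the alternating group `Aₙ` on `K = ker (Eⁿ → E)`. -/
def altHom : ↥(alternatingGroup (Fin n)) →* MulAut ↥(Ker n E) where
  toFun σ := KerAut n E σ.1
  map_one' := by
    ext x i
    rfl
  map_mul' σ τ := by
    ext x i
    rfl

/-!
A homomorphism `f` from `H = K ⋊ Aₙ` to an abelian group is trivial on `Aₙ`, which is perfect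
for `n ≥ 5`, and its restriction to `K` is `Aₙ`-invariant, because conjugation becomes trivial
in an abelian target. The group `K` is generated by the elements `aᵢ / aⱼ` (the element `a`
in coordinate `i` divided by `a` in coordinate `j`), and these telescope:
`(a_c / a_i) * (a_i / a_j) = a_c / a_j`. An even permutation fixing `c` and sending `i` to `j`
shows that `f (a_c / a_i) = f (a_c / a_j)`, hence `f (a_i / a_j) = 1`.
-/

theorem Finset.exists_notMem_of_card_lt {α : Type*} [Fintype α] (s : Finset α)
    (h : s.card < Fintype.card α) : ∃ c, c ∉ s := by
  obtain ⟨c, -, hc⟩ := Finset.exists_mem_notMem_of_card_lt_card (t := Finset.univ) h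
  exact ⟨c, hc⟩

namespace alternatingGroup

variable {α : Type*} [Fintype α] [DecidableEq α]

theorem exists_fix_apply_eq (h4 : 4 ≤ Fintype.card α) {c i j : α}
    (hci : c ≠ i) (hcj : c ≠ j) (hij : i ≠ j) :
    ∃ σ : alternatingGroup α, σ.1 c = c ∧ σ.1 i = j := by
  obtain ⟨m, hm⟩ := Finset.exists_notMem_of_card_lt {c, i, j}
    (Finset.card_le_three.trans_lt (by omega : 3 < Fintype.card α))
  simp only [Finset.mem_insert, Finset.mem_singleton, not_or] at hm
  obtain ⟨hmc, hmi, hmj⟩ := hm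
  refine ⟨⟨Equiv.swap i j * Equiv.swap j m, ?_⟩, ?_, ?_⟩
  · simp [Equiv.Perm.mem_alternatingGroup, Equiv.Perm.sign_swap hij,
      Equiv.Perm.sign_swap (Ne.symm hmj)]
  · simp [Equiv.swap_apply_of_ne_of_ne, hci, hcj, Ne.symm hmc]
  · simp [Equiv.swap_apply_of_ne_of_ne, hij, Ne.symm hmi]

theorem monoidHom_eq_one {C : Type*} [CommGroup C] (h5 : 5 ≤ Nat.card α)
    (f : alternatingGroup α →* C) : f = 1 := by
  ext σ
  exact Abelianization.commutator_subset_ker f <|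
    (commutator_alternatingGroup_eq_top h5).symm ▸ Subgroup.mem_top σ

end alternatingGroup

theorem SemidirectProduct.map_inl_aut {N G C : Type*} [Group N] [Group G] [CommGroup C]
    {φ : G →* MulAut N} (f : N ⋊[φ] G →* C) (g : G) (k : N) :
    f (inl (φ g k)) = f (inl k) := by
  rw [SemidirectProduct.inl_aut]
  simp only [map_mul, map_inv]
  exact mul_inv_cancel_comm _ _

namespace Ker

variable {n E}

def mulSingleDiv (a : E) (i j : Fin n) : Ker n E :=
  ⟨Pi.mulSingle i a / Pi.mulSingle j a, by
    simp [Ker, prodHom, MonoidHom.mem_ker, Finset.prod_div_distrib]⟩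

theorem mulSingleDiv_self (a : E) (i : Fin n) : mulSingleDiv a i i = 1 :=
  Subtype.ext (div_self' _)

theorem mulSingleDiv_mul_mulSingleDiv (a : E) (i l j : Fin n) :
    mulSingleDiv a i l * mulSingleDiv a l j = mulSingleDiv a i j :=
  Subtype.ext (div_mul_div_cancel _ _ _)

theorem altHom_mulSingleDiv (σ : alternatingGroup (Fin n)) (a : E) (i j : Fin n) :
    altHom n E σ (mulSingleDiv a i j) = mulSingleDiv a (σ.1 i) (σ.1 j) := by
  ext p
  simp [altHom, KerAut, mulSingleDiv, Pi.mulSingle_apply, Equiv.symm_apply_eq]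

theorem prod_mulSingleDiv (i₀ : Fin n) (k : Ker n E) :
    ∏ i, mulSingleDiv (k.1 i) i i₀ = k := by
  have hk : ∏ i, k.1 i = 1 := k.2
  have h₀ : ∏ i, (Pi.mulSingle i₀ (k.1 i) : Fin n → E) = 1 := by
    rw [← Pi.mulSingle_one i₀, ← hk]
    exact (map_prod (MonoidHom.mulSingle (fun _ : Fin n => E) i₀) _ _).symm
  apply Subtype.ext
  simp only [mulSingleDiv, Subgroup.val_finsetProd, Finset.prod_div_distrib,
    Finset.univ_prod_mulSingle, h₀, div_one]

variable {C : Type*} [CommGroup C]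

theorem map_mulSingleDiv_eq_one (hn : 4 ≤ n) (f : Ker n E →* C)
    (hf : ∀ σ k, f (altHom n E σ k) = f k) (a : E) (i j : Fin n) :
    f (mulSingleDiv a i j) = 1 := by
  rcases eq_or_ne i j with rfl | hij
  · rw [mulSingleDiv_self, map_one]
  obtain ⟨c, hc⟩ := Finset.exists_notMem_of_card_lt {i, j}
    (Finset.card_le_two.trans_lt (by simp only [Fintype.card_fin]; omega))
  simp only [Finset.mem_insert, Finset.mem_singleton, not_or] at hc
  obtain ⟨σ, hσc, hσi⟩ := alternatingGroup.exists_fix_apply_eq (by simpa) hc.1 hc.2 hij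
  have h := hf σ (mulSingleDiv a c i)
  rw [altHom_mulSingleDiv, hσc, hσi, ← mulSingleDiv_mul_mulSingleDiv a c i j, map_mul] at h
  exact mul_eq_left.mp h

theorem monoidHom_eq_one_of_invariant (hn : 4 ≤ n) (f : Ker n E →* C)
    (hf : ∀ σ k, f (altHom n E σ k) = f k) : f = 1 := by
  ext k
  rw [← prod_mulSingleDiv ⟨0, by omega⟩ k, map_prod]
  exact Finset.prod_eq_one fun i _ => map_mulSingleDiv_eq_one hn f hf _ _ _

end Ker

/-- For `n ≥ 5` and any abelian group `E`, the abelianization of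
`H = K ⋊ Aₙ` is trivial, where `K = ker (Eⁿ → E)` and the alternating group
`Aₙ` acts by permuting coordinates. -/
theorem stmt_2 (hn : 5 ≤ n) :
    ∀ x : Abelianization (↥(Ker n E) ⋊[altHom n E] ↥(alternatingGroup (Fin n))),
      x = 1 := by
  have h_of : (Abelianization.of :
      ↥(Ker n E) ⋊[altHom n E] ↥(alternatingGroup (Fin n)) →* _) = 1 := by
    refine SemidirectProduct.hom_ext ?_ ?_
    · exact Ker.monoidHom_eq_one_of_invariant (by omega) _
        fun σ k => SemidirectProduct.map_inl_aut Abelianization.of σ k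
    · exact alternatingGroup.monoidHom_eq_one (by simpa) _
  rintro ⟨x⟩
  exact DFunLike.congr_fun h_of x
end

section
/- Let F be a number field with embedding σ : F → ℂ and E = {x ∈ F^× : |σ(x)| = 1}. Then E/μ_F is a free abelian group (of at most countable rank), where μ_F is the group of roots of unity of F. Consequently E ≅ μ_F ⊕ ℤ^(S) for some at most countable set S. -/
/-!
The divisor map `Fˣ → ℤ^(primes of 𝓞 F)` has kernel `(𝓞 F)ˣ`, and the logarithmic embedding
(Dirichlet's unit theorem) maps `(𝓞 F)ˣ` onto a lattice `ℤ^r` with kernel the torsion. Over a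
PID, a submodule of a free module of countable rank is free of countable rank (choose, for each
`n`, an element supported on `[0, n]` whose `n`-th coefficient generates the ideal of all such
coefficients; these elements are triangular and span). Hence the image of the divisor map is
free, the divisor map splits, and `Fˣ` modulo torsion embeds into a free abelian group of
countable rank. This property passes to the subgroup `E`; for such a group `G` the quotient
`G/G_tors` is free of countable rank, so `G → G/G_tors` splits and `G ≅ G_tors × ℤ^(S)`.
-/

open Function Finsupp

theorem Finsupp.linearIndependent_of_triangular {R : Type*} [Ring R] [NoZeroDivisors R]
    (v : ℕ → ℕ →₀ R) (hv : ∀ n m, n < m → v n m = 0) :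
    LinearIndependent R (fun i : {n // v n n ≠ 0} => v i) := by
  classical
  rw [linearIndependent_iff']
  intro s c hsum
  induction s using Finset.induction_on_max with
  | empty => simp
  | insert a s ha ih =>
    rw [Finset.sum_insert (fun h => lt_irrefl a (ha a h))] at hsum
    have hca : c a = 0 := by
      have hcoord := congrArg (fun f : ℕ →₀ R => f a) hsum
      simp only [coe_add, Pi.add_apply, finsetSum_apply, coe_smul, Pi.smul_apply, smul_eq_mul,
        coe_zero, Pi.zero_apply] at hcoord
      rw [Finset.sum_eq_zero (fun i hi => by rw [hv i a (ha i hi), mul_zero]), add_zero] at hcoord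
      exact (mul_eq_zero.mp hcoord).resolve_right a.2
    rw [hca, zero_smul, zero_add] at hsum
    intro i hi
    rcases Finset.mem_insert.mp hi with rfl | hi
    · exact hca
    · exact ih hsum i hi

namespace Submodule

theorem exists_leading_coeff_generator {R : Type*} [CommRing R] [IsPrincipalIdealRing R]
    (N : Submodule R (ℕ →₀ R)) (n : ℕ) :
    ∃ x ∈ N ⊓ supported R R (Set.Iio (n + 1)),
      ∀ y ∈ N ⊓ supported R R (Set.Iio (n + 1)), ∃ c : R, y n = c * x n := by
  set I : Ideal R := (N ⊓ supported R R (Set.Iio (n + 1))).map (lapply n)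
  obtain ⟨x, hx, hxI⟩ := mem_map.mp (IsPrincipal.generator_mem I)
  refine ⟨x, hx, fun y hy => ?_⟩
  obtain ⟨c, hc⟩ :=
    (IsPrincipal.mem_iff_eq_smul_generator I).mp (mem_map_of_mem (f := lapply n) hy)
  exact ⟨c, by simpa [← hxI] using hc⟩

theorem exists_countable_basis_nat {R : Type*} [CommRing R] [IsDomain R]
    [IsPrincipalIdealRing R] (N : Submodule R (ℕ →₀ R)) :
    ∃ T : Type, Countable T ∧ Nonempty (Module.Basis T R N) := by
  choose x hxN hx using exists_leading_coeff_generator N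
  have hx_lt : ∀ n m, n < m → x n m = 0 := fun n m h =>
    (mem_supported' R _).mp (hxN n).2 m (by simp; omega)
  set v : {n // x n n ≠ 0} → ℕ →₀ R := fun i => x i
  have hlevel : ∀ n, N ⊓ supported R R (Set.Iio n) ≤ span R (Set.range v) := by
    intro n
    induction n with
    | zero =>
      intro y hy
      obtain rfl : y = 0 := by
        ext k
        exact (mem_supported' R y).mp hy.2 k (by simp)
      exact zero_mem _
    | succ n ih =>
      have hdrop : ∀ z ∈ N ⊓ supported R R (Set.Iio (n + 1)), z n = 0 →
          z ∈ span R (Set.range v) := fun z hz hzn =>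
        ih ⟨hz.1, (mem_supported R z).mpr fun k hk =>
          lt_of_le_of_ne (Nat.lt_succ_iff.mp ((mem_supported R z).mp hz.2 hk))
            (by rintro rfl; exact mem_support_iff.mp hk hzn)⟩
      intro y hy
      obtain ⟨c, hc⟩ := hx n y hy
      by_cases h : x n n = 0
      · exact hdrop y hy (by rw [hc, h, mul_zero])
      · have hxv : x n ∈ span R (Set.range v) := subset_span ⟨⟨n, h⟩, rfl⟩
        have := hdrop (y - c • x n) (sub_mem hy (smul_mem _ c (hxN n))) (by simp [hc])
        simpa using add_mem this (smul_mem _ c hxv)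
  have hspan : span R (Set.range v) = N := by
    refine le_antisymm (span_le.mpr ?_) fun y hy => ?_
    · rintro _ ⟨i, rfl⟩
      exact (hxN i).1
    · obtain ⟨n, hn⟩ := Finset.exists_nat_subset_range y.support
      refine hlevel n ⟨hy, (mem_supported R y).mpr ?_⟩
      exact fun k hk => by simpa using hn hk
  exact ⟨_, inferInstance, ⟨(Module.Basis.span (linearIndependent_of_triangular x hx_lt)).map
    (LinearEquiv.ofEq _ _ hspan)⟩⟩

theorem exists_countable_basis {R : Type*} [CommRing R] [IsDomain R] [IsPrincipalIdealRing R]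
    {ι : Type*} [Countable ι] (N : Submodule R (ι →₀ R)) :
    ∃ T : Type, Countable T ∧ Nonempty (Module.Basis T R N) := by
  obtain ⟨f, hf⟩ := Countable.exists_injective_nat ι
  obtain ⟨T, hT, ⟨b⟩⟩ := exists_countable_basis_nat (N.map (lmapDomain R R f))
  exact ⟨T, hT, ⟨b.map (equivMapOfInjective _ (mapDomain_injective hf) N).symm⟩⟩

end Submodule

theorem Subgroup.exists_mulEquiv_multiplicative_finsupp {ι : Type*} [Countable ι]
    (H : Subgroup (Multiplicative (ι →₀ ℤ))) :
    ∃ T : Type, Countable T ∧ Nonempty (H ≃* Multiplicative (T →₀ ℤ)) := by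
  obtain ⟨T, hT, ⟨b⟩⟩ := (Subgroup.toAddSubgroup' H).toIntSubmodule.exists_countable_basis
  let e : Additive H ≃+ (Subgroup.toAddSubgroup' H).toIntSubmodule :=
    { toFun := fun x => ⟨(x.toMul : Multiplicative (ι →₀ ℤ)).toAdd, x.toMul.2⟩
      invFun := fun y => .ofMul ⟨.ofAdd y.1, y.2⟩
      left_inv := fun _ => rfl
      right_inv := fun _ => rfl
      map_add' := fun _ _ => rfl }
  exact ⟨T, hT, ⟨AddEquiv.toMultiplicativeRight (e.trans b.repr.toAddEquiv)⟩⟩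

namespace MonoidHom

variable {G : Type*} [CommGroup G]

def mulEquivKerProdOfRightInverse {H : Type*} [CommGroup H] (f : G →* H) (s : H →* G)
    (hs : ∀ h, f (s h) = h) : G ≃* f.ker × H where
  toFun x := (⟨x * (s (f x))⁻¹, by simp [hs]⟩, f x)
  invFun p := p.1 * s p.2
  left_inv x := by simp
  right_inv p := by
    have hp : f p.1 = 1 := p.1.2
    ext <;> simp [hs, hp]
  map_mul' x y := by
    ext
    · simp only [map_mul, mul_inv]
      exact mul_mul_mul_comm _ _ _ _
    · exact map_mul f x y

theorem nonempty_mulEquiv_ker_prod_of_surjective {S : Type*} (f : G →* Multiplicative (S →₀ ℤ))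
    (hf : Surjective f) : Nonempty (G ≃* f.ker × Multiplicative (S →₀ ℤ)) := by
  let s := LinearMap.splittingOfFinsuppSurjective (toAdditiveLeft f).toIntLinearMap hf
  exact ⟨f.mulEquivKerProdOfRightInverse (AddMonoidHom.toMultiplicativeLeft s.toAddMonoidHom)
    (LinearMap.leftInverse_splittingOfFinsuppSurjective (toAdditiveLeft f).toIntLinearMap hf)⟩

theorem exists_surjective_ker_eq {ι : Type*} [Countable ι] (f : G →* Multiplicative (ι →₀ ℤ)) :
    ∃ (T : Type) (_ : Countable T) (g : G →* Multiplicative (T →₀ ℤ)),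
      Surjective g ∧ g.ker = f.ker := by
  obtain ⟨T, hT, ⟨e⟩⟩ := f.range.exists_mulEquiv_multiplicative_finsupp
  refine ⟨T, hT, e.toMonoidHom.comp f.rangeRestrict,
    e.surjective.comp f.rangeRestrict_surjective, ?_⟩
  rw [ker_comp_of_injective _ _ e.injective, ker_rangeRestrict]

end MonoidHom

def ModTorsionEmbedsInCountableFree (G : Type*) [CommGroup G] : Prop :=
  ∃ (S : Type) (_ : Countable S) (φ : G →* Multiplicative (S →₀ ℤ)), φ.ker = CommGroup.torsion G

namespace ModTorsionEmbedsInCountableFree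

variable {G H : Type*} [CommGroup G] [CommGroup H]

theorem of_injective (hG : ModTorsionEmbedsInCountableFree G) (f : H →* G) (hf : Injective f) :
    ModTorsionEmbedsInCountableFree H := by
  obtain ⟨S, hS, φ, hφ⟩ := hG
  exact ⟨S, hS, φ.comp f, by
    rw [← MonoidHom.comap_ker, hφ, CommGroup.comap_torsion_of_injective hf]⟩

theorem multiplicative_finsupp (S : Type) [Countable S] :
    ModTorsionEmbedsInCountableFree (Multiplicative (S →₀ ℤ)) :=
  ⟨S, inferInstance, MonoidHom.id _, by
    rw [MonoidHom.ker_id, eq_comm, ← CommGroup.isMulTorsionFree_iff_torsion_eq_bot]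
    infer_instance⟩

theorem prod (hG : ModTorsionEmbedsInCountableFree G) (hH : ModTorsionEmbedsInCountableFree H) :
    ModTorsionEmbedsInCountableFree (G × H) := by
  obtain ⟨S, hS, φ, hφ⟩ := hG
  obtain ⟨T, hT, ψ, hψ⟩ := hH
  let e : Multiplicative (S →₀ ℤ) × Multiplicative (T →₀ ℤ) ≃* Multiplicative (S ⊕ T →₀ ℤ) :=
    (MulEquiv.prodMultiplicative _ _).symm.trans
      (AddEquiv.toMultiplicative sumFinsuppAddEquivProdFinsupp.symm)
  refine ⟨S ⊕ T, inferInstance, e.toMonoidHom.comp (φ.prodMap ψ), ?_⟩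
  rw [MonoidHom.ker_comp_of_injective _ _ e.injective, MonoidHom.ker_prodMap, hφ, hψ,
    CommGroup.torsion_prod]

theorem of_ker {ι : Type*} [Countable ι] (f : G →* Multiplicative (ι →₀ ℤ))
    (hK : ModTorsionEmbedsInCountableFree f.ker) : ModTorsionEmbedsInCountableFree G := by
  obtain ⟨T, _, g, hg, hgf⟩ := f.exists_surjective_ker_eq
  obtain ⟨e⟩ := g.nonempty_mulEquiv_ker_prod_of_surjective hg
  have hK' : ModTorsionEmbedsInCountableFree g.ker :=
    hK.of_injective (MulEquiv.subgroupCongr hgf).toMonoidHom (MulEquiv.injective _)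
  exact (hK'.prod (multiplicative_finsupp T)).of_injective e.toMonoidHom e.injective

theorem exists_mulEquiv (hG : ModTorsionEmbedsInCountableFree G) :
    ∃ S : Type, Countable S ∧
      Nonempty ((G ⧸ CommGroup.torsion G) ≃* Multiplicative (S →₀ ℤ)) ∧
      Nonempty (G ≃* CommGroup.torsion G × Multiplicative (S →₀ ℤ)) := by
  obtain ⟨S, _, φ, hφ⟩ := hG
  obtain ⟨T, hT, g, hg, hgφ⟩ := φ.exists_surjective_ker_eq
  rw [hφ] at hgφ
  obtain ⟨e⟩ := g.nonempty_mulEquiv_ker_prod_of_surjective hg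
  exact ⟨T, hT, ⟨(QuotientGroup.quotientMulEquivOfEq hgφ.symm).trans
      (QuotientGroup.quotientKerEquivOfSurjective g hg)⟩,
    ⟨e.trans ((MulEquiv.subgroupCongr hgφ).prodCongr (MulEquiv.refl _))⟩⟩

end ModTorsionEmbedsInCountableFree

open NumberField IsDedekindDomain
open scoped nonZeroDivisors

theorem Ideal.countable_of_isNoetherianRing (R : Type*) [CommRing R] [IsNoetherianRing R]
    [Countable R] : Countable (Ideal R) :=
  Surjective.countable (f := fun s : Finset R => Ideal.span (s : Set R)) fun I =>
    IsNoetherian.noetherian I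

theorem NumberField.countable_heightOneSpectrum (F : Type*) [Field F] [NumberField F] :
    Countable (HeightOneSpectrum (𝓞 F)) :=
  have : Countable (𝓞 F) := Finsupp.Countable.of_moduleFinite (R := ℤ)
  have := Ideal.countable_of_isNoetherianRing (𝓞 F)
  Injective.countable fun _ _ => HeightOneSpectrum.ext

namespace FractionalIdeal

variable {R : Type*} [CommRing R] [IsDedekindDomain R] (K : Type*) [Field K] [Algebra R K]
  [IsFractionRing R K]

noncomputable def divisor :
    (FractionalIdeal R⁰ K)ˣ →* Multiplicative (HeightOneSpectrum R →₀ ℤ) where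
  toFun I := .ofAdd (Finsupp.ofSupportFinite (fun v => count K v I) (finite_factors I.val))
  map_one' := by
    ext v
    exact count_one K v
  map_mul' I J := by
    ext v
    exact count_mul K v I.ne_zero J.ne_zero

theorem divisor_injective : Injective (divisor (R := R) K) := by
  intro I J h
  have hcount (v : HeightOneSpectrum R) : count K v I = count K v J :=
    Finsupp.ext_iff.mp (congrArg Multiplicative.toAdd h) v
  rw [Units.ext_iff, ← finprod_heightOneSpectrum_factorization' K I.ne_zero,
    ← finprod_heightOneSpectrum_factorization' K J.ne_zero]
  simp only [hcount]

theorem ker_divisor_comp_toPrincipalIdeal :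
    ((divisor K).comp (toPrincipalIdeal R K)).ker =
      (Units.map (algebraMap R K : R →* K)).range := by
  rw [MonoidHom.ker_comp_of_injective _ _ (divisor_injective K)]
  ext x
  rw [MonoidHom.mem_ker, toPrincipalIdeal_eq_iff, Units.val_one, eq_comm, ← spanSingleton_one,
    spanSingleton_eq_spanSingleton, MonoidHom.mem_range]
  simp [Units.ext_iff, Units.smul_def, Algebra.smul_def]

end FractionalIdeal

theorem NumberField.Units.modTorsionEmbedsInCountableFree (F : Type*) [Field F] [NumberField F] :
    ModTorsionEmbedsInCountableFree (𝓞 F)ˣ := by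
  let ℓ : Additive (𝓞 F)ˣ →+ Units.unitLattice F := (Units.logEmbedding F).codRestrict _
    fun x => Submodule.mem_map_of_mem trivial
  refine ⟨Fin (Units.rank F), inferInstance, AddMonoidHom.toMultiplicativeRight
    ((Units.basisUnitLattice F).repr.toAddMonoidHom.comp ℓ), ?_⟩
  ext x
  refine Iff.trans ?_ Units.dirichletUnitTheorem.logEmbedding_eq_zero_iff
  rw [MonoidHom.mem_ker, AddMonoidHom.toMultiplicativeRight_apply_apply, ofAdd_eq_one]
  change (Units.basisUnitLattice F).repr (ℓ _) = 0 ↔ _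
  rw [LinearEquiv.map_eq_zero_iff, ← ZeroMemClass.coe_eq_zero]
  rfl

theorem NumberField.modTorsionEmbedsInCountableFree_units (F : Type*) [Field F] [NumberField F] :
    ModTorsionEmbedsInCountableFree Fˣ := by
  have := countable_heightOneSpectrum F
  have hj : Injective (Units.map (algebraMap (𝓞 F) F : 𝓞 F →* F)) :=
    Units.map_injective RingOfIntegers.coe_injective
  let d := (FractionalIdeal.divisor F).comp (toPrincipalIdeal (𝓞 F) F)
  let e : d.ker ≃* (𝓞 F)ˣ := (MulEquiv.subgroupCongr
    (FractionalIdeal.ker_divisor_comp_toPrincipalIdeal F)).trans (MonoidHom.ofInjective hj).symm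
  exact .of_ker d ((Units.modTorsionEmbedsInCountableFree F).of_injective e.toMonoidHom e.injective)

variable (F : Type*) [Field F] [NumberField F] (σ : F →+* ℂ)

/-- The subgroup `E = {x ∈ F^× : |σ(x)| = 1}` of the unit group of `F`. -/
def normOneSubgroup : Subgroup Fˣ where
  carrier := {u : Fˣ | ‖σ (u : F)‖ = 1}
  one_mem' := by simp
  mul_mem' := by
    intro a b ha hb
    simp only [Set.mem_setOf_eq, Units.val_mul, map_mul, norm_mul] at *
    rw [ha, hb, mul_one]
  inv_mem' := by
    intro a ha
    simp only [Set.mem_setOf_eq] at *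
    have : (σ ((a⁻¹ : Fˣ) : F)) * σ ((a : Fˣ) : F) = 1 := by
      rw [← map_mul]; simp
    have habs : ‖σ ((a⁻¹ : Fˣ) : F) * σ ((a : Fˣ) : F)‖ = ‖(1 : ℂ)‖ := by rw [this]
    rw [norm_mul, ha, mul_one, norm_one] at habs
    exact habs

-- `μ_F` is the torsion subgroup of `E`: every root of unity has absolute value `1` under `σ`.
/-- `E/μ_F` is free abelian of at most countable rank, and consequently
`E ≅ μ_F ⊕ ℤ^(S)` for some at most countable set `S`.  Here `μ_F`, the group of
roots of unity of `F`, is the torsion subgroup of `E`. -/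
theorem stmt_5 :
    ∃ S : Type, Countable S ∧
      Nonempty ((↥(normOneSubgroup F σ) ⧸ CommGroup.torsion ↥(normOneSubgroup F σ)) ≃*
        Multiplicative (S →₀ ℤ)) ∧
      Nonempty (↥(normOneSubgroup F σ) ≃*
        ↥(CommGroup.torsion ↥(normOneSubgroup F σ)) × Multiplicative (S →₀ ℤ)) :=
  ((modTorsionEmbedsInCountableFree_units F).of_injective (normOneSubgroup F σ).subtype
    Subtype.val_injective).exists_mulEquiv
end

section
/- Let F = ℚ(∛2) with any complex (non-real) embedding σ : F → ℂ. Then {x ∈ F : |σ(x)| = 1} = {±1}. -/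
/-! A cubic field with a non-real embedding `σ` has exactly three embeddings into `ℂ`: `σ`, its
conjugate `σ̄` and a third one `τ`. Hence `N(x) = τ(x) σ(x) σ̄(x) = τ(x) |σ(x)|²`, so `|σ(x)| = 1`
forces `τ(x) = N(x) ∈ ℚ`; by injectivity of `τ`, `x` is rational, and then `x = ±1`. -/

open Polynomial Module NumberField

theorem Rat.pow_ne_prime {p n : ℕ} [hp : Fact p.Prime] (hn : 1 < n) (b : ℚ) : b ^ n ≠ p := by
  intro hb
  have hval : (n : ℤ) * padicValRat p b = 1 := by
    rw [← padicValRat.pow, hb, padicValRat.self hp.out.one_lt]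
  have := Int.eq_one_of_mul_eq_one_right (by positivity) hval
  omega

section CubicField

variable {K : Type*} [Field K] [Algebra ℚ K]

theorem minpoly_eq_X_pow_three_sub_two {α : K} (hα : α ^ 3 = 2) : minpoly ℚ α = X ^ 3 - C 2 :=
  (minpoly.eq_of_irreducible_of_monic
    (X_pow_sub_C_irreducible_of_prime Nat.prime_three
      (mod_cast Rat.pow_ne_prime (p := 2) (by norm_num)))
    (by simp [hα]) (monic_X_pow_sub_C _ three_ne_zero)).symm

theorem finrank_eq_three_of_adjoin_cbrt_two {α : K} (hα : α ^ 3 = 2)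
    (hgen : Algebra.adjoin ℚ {α} = ⊤) : finrank ℚ K = 3 := by
  have hint : IsIntegral ℚ α := ⟨X ^ 3 - C 2, monic_X_pow_sub_C _ three_ne_zero, by simp [hα]⟩
  rw [(PowerBasis.ofAdjoinEqTop' hint hgen).finrank, PowerBasis.ofAdjoinEqTop'_dim,
    minpoly_eq_X_pow_three_sub_two hα, natDegree_X_pow_sub_C]

theorem exists_algebraMap_norm_eq_mul_normSq (h3 : finrank ℚ K = 3) {σ : K →+* ℂ}
    (hσ : ¬ ComplexEmbedding.IsReal σ) :
    ∃ τ : K →ₐ[ℚ] ℂ, ∀ y, algebraMap ℚ ℂ (Algebra.norm ℚ y) = τ y * Complex.normSq (σ y) := by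
  classical
  have : FiniteDimensional ℚ K := Module.finite_of_finrank_eq_succ h3
  let σ₁ : K →ₐ[ℚ] ℂ := σ.toRatAlgHom
  let σ₂ : K →ₐ[ℚ] ℂ := (ComplexEmbedding.conjugate σ).toRatAlgHom
  have hne : σ₁ ≠ σ₂ := fun h =>
    hσ (ComplexEmbedding.isReal_iff.2 (RingHom.ext fun y => (congrArg (· y) h).symm))
  obtain ⟨τ, hτ⟩ : ∃ τ, Finset.univ \ {σ₁, σ₂} = {τ} := by
    rw [← Finset.card_eq_one, Finset.card_sdiff_of_subset (Finset.subset_univ _), Finset.card_univ,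
      AlgHom.card, h3, Finset.card_pair hne]
  refine ⟨τ, fun y => ?_⟩
  rw [Algebra.norm_eq_prod_embeddings, ← Finset.prod_sdiff (Finset.subset_univ {σ₁, σ₂}), hτ,
    Finset.prod_singleton, Finset.prod_pair hne, ← Complex.mul_conj]
  rfl

theorem eq_algebraMap_norm_of_norm_apply_eq_one (h3 : finrank ℚ K = 3) {σ : K →+* ℂ}
    (hσ : ¬ ComplexEmbedding.IsReal σ) {x : K} (hx : ‖σ x‖ = 1) :
    x = algebraMap ℚ K (Algebra.norm ℚ x) := by
  obtain ⟨τ, hτ⟩ := exists_algebraMap_norm_eq_mul_normSq h3 hσ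
  refine τ.toRingHom.injective ?_
  change τ x = τ _
  rw [τ.commutes, hτ, Complex.normSq_eq_norm_sq, hx, one_pow, Complex.ofReal_one, mul_one]

theorem eq_one_or_eq_neg_one_of_norm_apply_eq_one (h3 : finrank ℚ K = 3) {σ : K →+* ℂ}
    (hσ : ¬ ComplexEmbedding.IsReal σ) {x : K} (hx : ‖σ x‖ = 1) : x = 1 ∨ x = -1 := by
  obtain ⟨q, rfl⟩ : ∃ q : ℚ, x = algebraMap ℚ K q :=
    ⟨_, eq_algebraMap_norm_of_norm_apply_eq_one h3 hσ hx⟩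
  rw [eq_ratCast, map_ratCast, Complex.norm_ratCast] at hx
  rcases abs_eq zero_le_one |>.1 (mod_cast hx : |q| = 1) with rfl | rfl <;> simp

end CubicField

theorem stmt_6_general (F : Type*) [Field F] [Algebra ℚ F]
    (α : F) (hα : α ^ 3 = 2) (hgen : Algebra.adjoin ℚ {α} = ⊤)
    (σ : F →+* ℂ) (hσ : (σ α).im ≠ 0) :
    {x : F | ‖σ x‖ = 1} = {1, -1} := by
  have h3 := finrank_eq_three_of_adjoin_cbrt_two hα hgen
  have hσ' : ¬ ComplexEmbedding.IsReal σ := fun h =>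
    hσ (Complex.conj_eq_iff_im.1 (RingHom.congr_fun h α))
  ext x
  refine ⟨eq_one_or_eq_neg_one_of_norm_apply_eq_one h3 hσ', ?_⟩
  rintro (rfl | rfl) <;> simp

/-- Let `F = ℚ(∛2)` with a complex (non-real) embedding `σ : F → ℂ`.  Then
`{x ∈ F : |σ(x)| = 1} = {±1}`. -/
theorem stmt_6 (F : Type*) [Field F] [NumberField F] [Algebra ℚ F]
    (α : F) (hα : α ^ 3 = 2) (hgen : Algebra.adjoin ℚ {α} = ⊤)
    (σ : F →+* ℂ) (hσ : (σ α).im ≠ 0) :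
    {x : F | ‖σ x‖ = 1} = {1, -1} :=
  stmt_6_general F α hα hgen σ hσ
end

section
/- Let K be an integral domain with a multiplicative norm |·| : K → ℝ≥0 and O(n) = {x ∈ Kⁿ : ∑ᵢ|xᵢ| ≤ 1}. Suppose A is an n×n matrix over K such that every column of A lies in O(n) (i.e., column L¹-norms are ≤ 1) and A is invertible with A⁻¹ also having all columns in O(n). Then A has exactly one nonzero entry in each row and each column, and each nonzero entry has norm exactly 1. -/
/-!
For `N * M = 1`, comparing diagonal entries gives
`1 = |∑ₓ N i x * M x i| ≤ ∑ₓ |N i x| |M x i| ≤ ∑ₓ |M x i| ≤ 1`, since the entries of `N` have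
norm at most `1`. Equality throughout forces `|N i k| = 1` whenever `M k i ≠ 0`. Applied to
`B * A = 1` and then to `A * B = 1`, every nonzero entry of `A` (and the corresponding entry of
`B`) has norm `1`; a column of norm at most `1` holds at most one such entry, and invertibility
gives at least one in each row and column.
-/

open Matrix

namespace Matrix

variable {R S ι κ : Type*} [Semiring R] [CommRing S] [LinearOrder S] [IsStrictOrderedRing S]

def ColumnsInUnitBall [Fintype ι] (abv : AbsoluteValue R S) (A : Matrix ι κ R) : Prop :=
  ∀ j, ∑ i, abv (A i j) ≤ 1

variable {abv : AbsoluteValue R S}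

theorem ColumnsInUnitBall.abv_apply_le_one [Fintype ι] {A : Matrix ι κ R}
    (hA : A.ColumnsInUnitBall abv) (i : ι) (j : κ) : abv (A i j) ≤ 1 :=
  (Finset.single_le_sum (fun k _ => abv.nonneg (A k j)) (Finset.mem_univ i)).trans (hA j)

theorem ColumnsInUnitBall.eq_of_abv_eq_one [Fintype ι] {A : Matrix ι κ R}
    (hA : A.ColumnsInUnitBall abv) {i i' : ι} {j : κ} (hi : abv (A i j) = 1)
    (hi' : abv (A i' j) = 1) : i = i' := by
  classical
  by_contra hne
  have hpair : abv (A i j) + abv (A i' j) ≤ ∑ k, abv (A k j) := by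
    rw [← Finset.sum_pair (f := fun k => abv (A k j)) hne]
    exact Finset.sum_le_sum_of_subset_of_nonneg (Finset.subset_univ _)
      fun k _ _ => abv.nonneg _
  linarith [hA j]

variable [Fintype ι] [DecidableEq ι]

theorem exists_apply_ne_zero_of_mul_eq_one_left [Nontrivial R] {M N : Matrix ι ι R}
    (hMN : M * N = 1) (i : ι) : ∃ k, M i k ≠ 0 := by
  by_contra! h
  have : (M * N) i i = 0 := by simp [mul_apply, h]
  simp [hMN] at this

theorem exists_apply_ne_zero_of_mul_eq_one_right [Nontrivial R] {M N : Matrix ι ι R}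
    (hMN : M * N = 1) (i : ι) : ∃ k, N k i ≠ 0 := by
  by_contra! h
  have : (M * N) i i = 0 := by simp [mul_apply, h]
  simp [hMN] at this

theorem abv_apply_eq_one_of_mul_eq_one [Nontrivial R] {M N : Matrix ι ι R}
    (hNM : N * M = 1) (hM : M.ColumnsInUnitBall abv) (hN : ∀ i k, abv (N i k) ≤ 1)
    {i k : ι} (hk : M k i ≠ 0) : abv (N i k) = 1 := by
  by_contra hne
  have hlt : abv (N i k) < 1 := lt_of_le_of_ne (hN i k) hne
  have hone_le : 1 ≤ ∑ x, abv (N i x) * abv (M x i) :=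
    calc (1 : S) = abv ((N * M) i i) := by simp [hNM]
      _ ≤ ∑ x, abv (N i x * M x i) := abv.sum_le _ _
      _ = ∑ x, abv (N i x) * abv (M x i) := by simp only [map_mul]
  have hlt_col : ∑ x, abv (N i x) * abv (M x i) < ∑ x, abv (M x i) :=
    Finset.sum_lt_sum
      (fun x _ => mul_le_of_le_one_left (abv.nonneg _) (hN i x))
      ⟨k, Finset.mem_univ k, mul_lt_of_lt_one_left (abv.pos hk) hlt⟩
  linarith [hM i]

end Matrix

/-- Let `K` be an integral domain with a multiplicative norm and
`O(n) = {x ∈ Kⁿ : ∑ᵢ v xᵢ ≤ 1}`.  If `A` is an invertible `n×n` matrix over `K`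
such that all columns of `A` and of `A⁻¹` lie in `O(n)`, then `A` has exactly
one nonzero entry in each row and each column, and each nonzero entry has norm
exactly `1`. -/
theorem stmt_9 (K : Type*) [CommRing K] [IsDomain K] (v : K → ℝ)
    (hv0 : ∀ x, 0 ≤ v x) (hv_eq0 : ∀ x, v x = 0 ↔ x = 0)
    (hv_mul : ∀ x y, v (x * y) = v x * v y)
    (hv_add : ∀ x y, v (x + y) ≤ v x + v y)
    (n : ℕ) (A B : Matrix (Fin n) (Fin n) K)
    (hAB : A * B = 1) (hBA : B * A = 1)
    (hA : ∀ j, ∑ i, v (A i j) ≤ 1) (hB : ∀ j, ∑ i, v (B i j) ≤ 1) :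
    (∀ j, ∃! i, A i j ≠ 0) ∧ (∀ i, ∃! j, A i j ≠ 0) ∧
      (∀ i j, A i j ≠ 0 → v (A i j) = 1) := by
  let abv : AbsoluteValue K ℝ := ⟨⟨v, hv_mul⟩, hv0, hv_eq0, hv_add⟩
  have hA' : A.ColumnsInUnitBall abv := hA
  have hB' : B.ColumnsInUnitBall abv := hB
  have abv_B_eq_one {i j} (h : A i j ≠ 0) : abv (B j i) = 1 :=
    abv_apply_eq_one_of_mul_eq_one hBA hA' hB'.abv_apply_le_one h
  have abv_A_eq_one {i j} (h : A i j ≠ 0) : abv (A i j) = 1 :=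
    abv_apply_eq_one_of_mul_eq_one hAB hB' hA'.abv_apply_le_one
      (abv.ne_zero_iff.1 (by simp [abv_B_eq_one h]))
  refine ⟨fun j => ?_, fun i => ?_, fun i j => abv_A_eq_one⟩
  · obtain ⟨i, hi⟩ := exists_apply_ne_zero_of_mul_eq_one_right hBA j
    exact ⟨i, hi, fun i' hi' => hA'.eq_of_abv_eq_one (abv_A_eq_one hi') (abv_A_eq_one hi)⟩
  · obtain ⟨j, hj⟩ := exists_apply_ne_zero_of_mul_eq_one_left hAB i
    exact ⟨j, hj, fun j' hj' => hB'.eq_of_abv_eq_one (abv_B_eq_one hj') (abv_B_eq_one hj)⟩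
end

section
/- Let F be a number field, σ₁, σ₂ : F → ℂ two embeddings, and O = {x ∈ F : |σ₁(x)| ≤ 1 and |σ₂(x)| ≤ 1}. Then 𝔭 := {x ∈ O : |σ₁(x)σ₂(x)| < 1} is closed under the operation: if s₁,...,sₙ ∈ 𝔭 and (x₁,...,xₙ) ∈ Fⁿ with ∑ⱼ|σᵢ(xⱼ)| ≤ 1 for i = 1,2, then ∑ⱼ sⱼxⱼ ∈ 𝔭; and the complement O \ 𝔭 = {x ∈ O : |σ₁(x)| = |σ₂(x)| = 1} is multiplicatively closed and contains 1. -/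
/-!
Both absolute values are at most one on `O`, so `x ∈ O` lies outside `𝔭` exactly when
`|σ₁ x| = |σ₂ x| = 1`; this description is visibly multiplicative. For a combination
`∑ sⱼ xⱼ` with every `sⱼ ∈ 𝔭`, the triangle inequality bounds `|σᵢ (∑ sⱼ xⱼ)|` by
`∑ |σᵢ xⱼ| ≤ 1`, and if some `xⱼ ≠ 0` then `sⱼ` has `|σᵢ sⱼ| < 1` for one of the two
embeddings, which makes that bound strict.
-/

section OrderedSemiring

variable {α : Type*} [Semiring α] [LinearOrder α] [IsOrderedRing α] {a b : α}

lemma mul_lt_one_iff_of_le_one (ha₀ : 0 ≤ a) (hb₀ : 0 ≤ b) (ha : a ≤ 1) (hb : b ≤ 1) :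
    a * b < 1 ↔ a < 1 ∨ b < 1 := by
  refine ⟨fun hab => ?_, ?_⟩
  · by_contra! h
    exact hab.not_ge (one_le_mul_of_one_le_of_one_le h.1 h.2)
  · rintro (ha' | hb')
    · exact mul_lt_one_of_nonneg_of_lt_one_left ha₀ ha' hb
    · exact mul_lt_one_of_nonneg_of_lt_one_right ha hb₀ hb'

lemma not_mul_lt_one_iff_of_le_one (ha₀ : 0 ≤ a) (hb₀ : 0 ≤ b) (ha : a ≤ 1) (hb : b ≤ 1) :
    ¬ a * b < 1 ↔ a = 1 ∧ b = 1 := by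
  rw [mul_lt_one_iff_of_le_one ha₀ hb₀ ha hb, not_or, not_lt, not_lt]
  exact and_congr ⟨ha.antisymm, Eq.ge⟩ ⟨hb.antisymm, Eq.ge⟩

end OrderedSemiring

section NormedDivisionRing

variable {R 𝕜 ι : Type*} [NormedDivisionRing 𝕜] [Fintype ι]

lemma norm_map_sum_mul_le [Semiring R] (σ : R →+* 𝕜) {s : ι → R} (x : ι → R)
    (hs : ∀ j, ‖σ (s j)‖ ≤ 1) :
    ‖σ (∑ j, s j * x j)‖ ≤ ∑ j, ‖σ (x j)‖ := by
  rw [map_sum]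
  refine (norm_sum_le _ _).trans (Finset.sum_le_sum fun j _ => ?_)
  rw [map_mul, norm_mul]
  exact mul_le_of_le_one_left (norm_nonneg _) (hs j)

lemma norm_map_sum_mul_lt [Semiring R] (σ : R →+* 𝕜) {s x : ι → R}
    (hs : ∀ j, ‖σ (s j)‖ ≤ 1) {j₀ : ι} (hsj₀ : ‖σ (s j₀)‖ < 1) (hxj₀ : σ (x j₀) ≠ 0) :
    ‖σ (∑ j, s j * x j)‖ < ∑ j, ‖σ (x j)‖ := by
  rw [map_sum]
  refine (norm_sum_le _ _).trans_lt (Finset.sum_lt_sum (fun j _ => ?_) ⟨j₀, Finset.mem_univ _, ?_⟩)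
  · rw [map_mul, norm_mul]
    exact mul_le_of_le_one_left (norm_nonneg _) (hs j)
  · rw [map_mul, norm_mul]
    exact mul_lt_of_lt_one_left (norm_pos_iff.mpr hxj₀) hsj₀

variable [DivisionRing R] (σ₁ σ₂ : R →+* 𝕜)

lemma norm_mul_map_sum_mul_lt_one {s x : ι → R}
    (hs₁ : ∀ j, ‖σ₁ (s j)‖ ≤ 1) (hs₂ : ∀ j, ‖σ₂ (s j)‖ ≤ 1)
    (hs : ∀ j, ‖σ₁ (s j) * σ₂ (s j)‖ < 1)
    (hx₁ : ∑ j, ‖σ₁ (x j)‖ ≤ 1) (hx₂ : ∑ j, ‖σ₂ (x j)‖ ≤ 1) :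
    ‖σ₁ (∑ j, s j * x j) * σ₂ (∑ j, s j * x j)‖ < 1 := by
  set y := ∑ j, s j * x j
  by_cases hx : ∀ j, x j = 0
  · simp [y, hx]
  obtain ⟨j₀, hxj₀⟩ := not_forall.mp hx
  have hy₁ : ‖σ₁ y‖ ≤ 1 := (norm_map_sum_mul_le σ₁ x hs₁).trans hx₁
  have hy₂ : ‖σ₂ y‖ ≤ 1 := (norm_map_sum_mul_le σ₂ x hs₂).trans hx₂
  have hsj₀ := hs j₀
  rw [norm_mul, mul_lt_one_iff_of_le_one (norm_nonneg _) (norm_nonneg _) (hs₁ j₀) (hs₂ j₀)]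
    at hsj₀
  rw [norm_mul, mul_lt_one_iff_of_le_one (norm_nonneg _) (norm_nonneg _) hy₁ hy₂]
  rcases hsj₀ with h₁ | h₂
  · exact .inl ((norm_map_sum_mul_lt σ₁ hs₁ h₁ ((map_ne_zero σ₁).mpr hxj₀)).trans_le hx₁)
  · exact .inr ((norm_map_sum_mul_lt σ₂ hs₂ h₂ ((map_ne_zero σ₂).mpr hxj₀)).trans_le hx₂)

end NormedDivisionRing

theorem stmt_12_general (F : Type*) [Field F] (σ₁ σ₂ : F →+* ℂ)
    (O : Set F) (hO : O = {x | ‖σ₁ x‖ ≤ 1 ∧ ‖σ₂ x‖ ≤ 1})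
    (p : Set F) (hp : p = {x ∈ O | ‖σ₁ x * σ₂ x‖ < 1}) :
    (∀ (n : ℕ) (s x : Fin n → F),
        (∀ j, s j ∈ p) →
        (∑ j, ‖σ₁ (x j)‖) ≤ 1 →
        (∑ j, ‖σ₂ (x j)‖) ≤ 1 →
        (∑ j, s j * x j) ∈ p) ∧
    (O \ p = {x ∈ O | ‖σ₁ x‖ = 1 ∧ ‖σ₂ x‖ = 1}) ∧
    (∀ x ∈ O \ p, ∀ y ∈ O \ p, x * y ∈ O \ p) ∧
    (1 : F) ∈ O \ p := by
  have hcompl : O \ p = {x ∈ O | ‖σ₁ x‖ = 1 ∧ ‖σ₂ x‖ = 1} := by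
    subst hO hp
    ext x
    simp only [Set.mem_sdiff, Set.mem_ofPred_eq, not_and, and_congr_right_iff]
    rintro ⟨h₁, h₂⟩
    rw [← not_mul_lt_one_iff_of_le_one (norm_nonneg _) (norm_nonneg _) h₁ h₂, norm_mul]
    exact ⟨fun h => h ⟨h₁, h₂⟩, fun h _ => h⟩
  refine ⟨fun n s x hs hx₁ hx₂ => ?_, hcompl, ?_, ?_⟩
  · subst hO hp
    exact ⟨⟨(norm_map_sum_mul_le σ₁ x fun j => (hs j).1.1).trans hx₁,
      (norm_map_sum_mul_le σ₂ x fun j => (hs j).1.2).trans hx₂⟩,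
      norm_mul_map_sum_mul_lt_one σ₁ σ₂ (fun j => (hs j).1.1) (fun j => (hs j).1.2)
        (fun j => (hs j).2) hx₁ hx₂⟩
  · rw [hcompl, hO]
    rintro x ⟨-, hx₁, hx₂⟩ y ⟨-, hy₁, hy₂⟩
    simp [hx₁, hx₂, hy₁, hy₂]
  · rw [hcompl, hO]
    simp

/-- For a number field `F` with embeddings `σ₁, σ₂ : F → ℂ` and
`O = {x : |σ₁ x| ≤ 1 ∧ |σ₂ x| ≤ 1}`, the set `𝔭 = {x ∈ O : |σ₁(x)σ₂(x)| < 1}`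
is closed under `O`-linear combinations, and its complement in `O` equals
`{x ∈ O : |σ₁ x| = |σ₂ x| = 1}`, which is multiplicatively closed and
contains `1`. -/
theorem stmt_12 (F : Type*) [Field F] [NumberField F] (σ₁ σ₂ : F →+* ℂ)
    (O : Set F) (hO : O = {x | ‖σ₁ x‖ ≤ 1 ∧ ‖σ₂ x‖ ≤ 1})
    (p : Set F) (hp : p = {x ∈ O | ‖σ₁ x * σ₂ x‖ < 1}) :
    (∀ (n : ℕ) (s x : Fin n → F),
        (∀ j, s j ∈ p) →
        (∑ j, ‖σ₁ (x j)‖) ≤ 1 →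
        (∑ j, ‖σ₂ (x j)‖) ≤ 1 →
        (∑ j, s j * x j) ∈ p) ∧
    (O \ p = {x ∈ O | ‖σ₁ x‖ = 1 ∧ ‖σ₂ x‖ = 1}) ∧
    (∀ x ∈ O \ p, ∀ y ∈ O \ p, x * y ∈ O \ p) ∧
    (1 : F) ∈ O \ p :=
  stmt_12_general F σ₁ σ₂ O hO p hp
end

section
/- There exists a number field F of the form ℚ[t]/(p(t)) with irreducible p and two embeddings σ₁, σ₂ : F → ℂ such that the inclusion 𝔭₁ ⊆ 𝔭 is strict, where 𝔭₁ = {x ∈ O : |σ₁(x)| < 1}, 𝔭 = {x ∈ O : |σ₁(x)σ₂(x)| < 1}, and O = {x ∈ F : |σᵢ(x)| ≤ 1, i = 1,2}. Concretely: there is an irreducible polynomial p over ℚ with roots a₁, a₂ ∈ ℂ satisfying |a₁| = 1 and |a₂| < 1. -/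
/-!
Take the Salem quartic `p = X⁴ - X³ - X² - X + 1`. Its reduction mod 2 is the cyclotomic
polynomial `Φ₅`, which is irreducible over `𝔽₂` because 2 has order `4 = φ(5)` modulo 5; as `p`
is monic, it is irreducible over `ℤ` and hence over `ℚ`.

Being reciprocal, `p` factors as `(X² - 2cX + 1)(X² - 2dX + 1)` where `c, d = (1 ∓ √13)/4` are
the roots of `4t² - 2t - 3`. Since `|c| < 1` the first factor has its roots on the unit circle,
and `p(0) > 0 > p(3/5)` gives a real root in the open unit disc.
-/

open Polynomial

theorem ZMod.irreducible_cyclotomic_of_orderOf_eq_totient {p n : ℕ} [Fact p.Prime]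
    (hpn : p.Coprime n) (h : orderOf (ZMod.unitOfCoprime p hpn) = n.totient) :
    Irreducible (cyclotomic n (ZMod p)) :=
  ZMod.irreducible_of_dvd_cyclotomic_of_natDegree
    ((Fact.out : p.Prime).coprime_iff_not_dvd.mp hpn) dvd_rfl
    (by rw [natDegree_cyclotomic, h])

theorem ZMod.irreducible_cyclotomic_five_two : Irreducible (cyclotomic 5 (ZMod 2)) := by
  refine ZMod.irreducible_cyclotomic_of_orderOf_eq_totient (by norm_num) ?_
  rw [Nat.totient_prime (by norm_num), orderOf_eq_iff (by norm_num)]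
  decide

theorem Complex.exists_norm_eq_one_sq_sub_mul_add_one_eq_zero {c : ℝ} (hc : |c| ≤ 1) :
    ∃ z : ℂ, ‖z‖ = 1 ∧ z ^ 2 - 2 * c * z + 1 = 0 := by
  set s := √(1 - c ^ 2)
  have hs : s ^ 2 = 1 - c ^ 2 := Real.sq_sqrt (by nlinarith [abs_le.mp hc])
  refine ⟨c + s * I, ?_, ?_⟩
  · rw [norm_def, normSq_add_mul_I, hs, add_sub_cancel, Real.sqrt_one]
  · have hsC : (s : ℂ) ^ 2 = 1 - c ^ 2 := by exact_mod_cast hs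
    linear_combination (s : ℂ) ^ 2 * I_sq - hsC

noncomputable def salemQuartic (R : Type*) [CommRing R] : R[X] :=
  X ^ 4 - X ^ 3 - X ^ 2 - X + 1

theorem map_salemQuartic {R S : Type*} [CommRing R] [CommRing S] (f : R →+* S) :
    (salemQuartic R).map f = salemQuartic S := by
  simp [salemQuartic]

theorem salemQuartic_monic : (salemQuartic ℤ).Monic := by
  unfold salemQuartic
  monicity!

theorem aeval_salemQuartic {A : Type*} [CommRing A] [Algebra ℚ A] (a : A) :
    aeval a (salemQuartic ℚ) = a ^ 4 - a ^ 3 - a ^ 2 - a + 1 := by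
  simp [salemQuartic]

theorem salemQuartic_zmod_two : salemQuartic (ZMod 2) = cyclotomic 5 (ZMod 2) := by
  have : Fact (Nat.Prime 5) := ⟨by norm_num⟩
  rw [cyclotomic_prime, salemQuartic]
  simp only [Finset.sum_range_succ, Finset.sum_range_zero, pow_zero, pow_one, zero_add,
    sub_eq_add_neg, CharTwo.neg_eq]
  ring

theorem irreducible_salemQuartic : Irreducible (salemQuartic ℚ) := by
  have hℤ : Irreducible (salemQuartic ℤ) :=
    salemQuartic_monic.irreducible_of_irreducible_map (Int.castRingHom (ZMod 2)) _
      (by rw [map_salemQuartic, salemQuartic_zmod_two]; exact ZMod.irreducible_cyclotomic_five_two)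
  rw [← map_salemQuartic (algebraMap ℤ ℚ)]
  exact salemQuartic_monic.irreducible_iff_irreducible_map_fraction_map.mp hℤ

theorem exists_aeval_salemQuartic_eq_zero_norm_eq_one :
    ∃ z : ℂ, aeval z (salemQuartic ℚ) = 0 ∧ ‖z‖ = 1 := by
  have h13 : √13 ^ 2 = 13 := Real.sq_sqrt (by norm_num)
  have h3 : 3 ≤ √13 := Real.le_sqrt_of_sq_le (by norm_num)
  have h4 : √13 ≤ 4 := Real.sqrt_le_iff.mpr ⟨by norm_num, by norm_num⟩
  obtain ⟨z, hz_norm, hz⟩ := Complex.exists_norm_eq_one_sq_sub_mul_add_one_eq_zero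
    (c := (1 - √13) / 4) (abs_le.mpr ⟨by linarith, by linarith⟩)
  refine ⟨z, ?_, hz_norm⟩
  have h13C : (√13 : ℂ) ^ 2 = 13 := by exact_mod_cast h13
  push_cast at hz
  rw [aeval_salemQuartic]
  linear_combination (z ^ 2 + ((1 - √13) / 2 - 1) * z + 1) * hz + z ^ 2 / 4 * h13C

theorem exists_aeval_salemQuartic_eq_zero_norm_lt_one :
    ∃ z : ℂ, aeval z (salemQuartic ℚ) = 0 ∧ ‖z‖ < 1 := by
  obtain ⟨x, ⟨hx0, hx1⟩, hx⟩ := intermediate_value_Icc' (by norm_num : (0 : ℝ) ≤ 3 / 5)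
    (f := fun x : ℝ => x ^ 4 - x ^ 3 - x ^ 2 - x + 1) (by fun_prop)
    (show (0 : ℝ) ∈ Set.Icc _ _ by norm_num)
  refine ⟨x, ?_, ?_⟩
  · rw [aeval_salemQuartic]
    exact_mod_cast hx
  · rw [Complex.norm_real, Real.norm_of_nonneg hx0]
    linarith

/-- There exists an irreducible polynomial `p(t) ∈ ℚ[t]` with two complex roots
`a₁, a₂` such that `|a₁| = 1` and `|a₂| < 1`. -/
theorem stmt_13 :
    ∃ p : Polynomial ℚ, Irreducible p ∧
      ∃ a₁ a₂ : ℂ, Polynomial.aeval a₁ p = 0 ∧ Polynomial.aeval a₂ p = 0 ∧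
        ‖a₁‖ = 1 ∧ ‖a₂‖ < 1 := by
  obtain ⟨a₁, ha₁, ha₁_norm⟩ := exists_aeval_salemQuartic_eq_zero_norm_eq_one
  obtain ⟨a₂, ha₂, ha₂_norm⟩ := exists_aeval_salemQuartic_eq_zero_norm_lt_one
  exact ⟨salemQuartic ℚ, irreducible_salemQuartic, a₁, a₂, ha₁, ha₂, ha₁_norm, ha₂_norm⟩
end
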